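/- Let g : ℝ^d → ℝ be a finite-valued convex function, A a matrix, ξ* a fixed vector, and let M[ξ*] := {u : −Aᵀξ* ∈ ∂g(u)} be nonempty and closed (so Euclidean projections onto it exist). Let K ⊆ ℝ^d and suppose the restricted firm convexity bound holds: g(x) + ⟨Aᵀξ*, x⟩ − inf_{u∈M[ξ*]}(g(u) + ⟨Aᵀξ*, u⟩) ≥ (γ_K/2) dist(x, M[ξ*])² for all x ∈ K, with γ_K > 0. Then for all x ∈ K, dist(x, M[ξ*]) ≤ (2/γ_K) · dist(−Aᵀξ*, ∂g(x)), where dist(−Aᵀξ*, ∂g(x)) = inf{‖v + Aᵀξ*‖ : v ∈ ∂g(x)}. -/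

import Mathlib

noncomputable section

open Metric Set
open scoped RealInnerProductSpace

/-- `E d` is the Euclidean space `ℝ^d`. -/
abbrev E (d : ℕ) : Type := EuclideanSpace ℝ (Fin d)

/-- The convex subdifferential of `g : ℝ^d → ℝ` at `x`. -/
def subdiff {d : ℕ} (g : E d → ℝ) (x : E d) : Set (E d) :=
  {v | ∀ y, g x + ⟪v, y - x⟫ ≤ g y}

lemma subdiff_nonempty {d : ℕ} (g : E d → ℝ) (hg : ConvexOn ℝ Set.univ g) (x : E d) :
    (subdiff g x).Nonempty := by
  have hcont : Continuous g :=
    continuousOn_univ.mp (hg.continuousOn isOpen_univ)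
  set S : Set (E d × ℝ) := {p | g p.1 < p.2} with hS
  have hSopen : IsOpen S := isOpen_lt (hcont.comp continuous_fst) continuous_snd
  have hSconv : Convex ℝ S := by
    rintro p hp q hq a b ha hb hab
    have h1 : g (a • p.1 + b • q.1) ≤ a * g p.1 + b * g q.1 :=
      hg.2 (mem_univ _) (mem_univ _) ha hb hab
    simp only [hS, mem_setOf_eq] at hp hq ⊢
    have : a * g p.1 + b * g q.1 < a * p.2 + b * q.2 := by
      rcases ha.lt_or_eq with ha' | ha'
      · nlinarith [mul_nonneg hb (sub_nonneg.2 hq.le)]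
      · have hb1 : b = 1 := by linarith
        nlinarith
    calc g (a • p.1 + b • q.1) ≤ a * g p.1 + b * g q.1 := h1
      _ < (a • p + b • q).2 := this
  have hx : (x, g x) ∉ S := by simp [hS]
  obtain ⟨f, hf⟩ := geometric_hahn_banach_open_point hSconv hSopen hx
  set β : ℝ := f (0, 1) with hβdef
  have hfsplit : ∀ (y : E d) (t : ℝ), f (y, t) = f (y, 0) + t * β := by
    intro y t
    have : (y, t) = (y, (0 : ℝ)) + t • ((0 : E d), (1 : ℝ)) := by
      simp [Prod.ext_iff]
    rw [this, map_add, map_smul]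
    simp [hβdef]
  have hβ : β < 0 := by
    have h1 := hf (x, g x + 1) (by simp [hS])
    rw [hfsplit x (g x + 1), hfsplit x (g x)] at h1
    linarith
  have key : ∀ y, f (y, 0) + g y * β ≤ f (x, 0) + g x * β := by
    intro y
    refine le_of_forall_pos_lt_add fun ε hε => ?_
    have ht : (0 : ℝ) < ε / (-β) := div_pos hε (by linarith)
    have h1 := hf (y, g y + ε / (-β)) (by simp [hS, ht])
    rw [hfsplit y _, hfsplit x _] at h1
    have hβne : (-β) ≠ 0 := by intro h; simp at h; exact absurd h (ne_of_lt hβ)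
    have : (ε / (-β)) * β = -ε := by field_simp; rw [div_self hβ.ne]
    nlinarith
  set φ : E d →L[ℝ] ℝ := f.comp (ContinuousLinearMap.inl ℝ (E d) ℝ) with hφ
  refine ⟨(InnerProductSpace.toDual ℝ (E d)).symm ((-β)⁻¹ • φ), fun y => ?_⟩
  have hv : ∀ z : E d, ⟪(InnerProductSpace.toDual ℝ (E d)).symm ((-β)⁻¹ • φ), z⟫
      = (-β)⁻¹ * f (z, 0) := by
    intro z
    rw [InnerProductSpace.toDual_symm_apply]
    simp [hφ]
  rw [inner_sub_right, hv, hv]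
  have hky := key y
  have hβpos : (0 : ℝ) < -β := by linarith
  have h2 : (-β)⁻¹ * f (y, 0) - (-β)⁻¹ * f (x, 0) ≤ g y - g x := by
    rw [← mul_sub]
    have h3 : f (y, 0) - f (x, 0) ≤ (g x - g y) * β := by linarith
    calc (-β)⁻¹ * (f (y, 0) - f (x, 0)) ≤ (-β)⁻¹ * ((g x - g y) * β) := by
          apply mul_le_mul_of_nonneg_left h3 (by positivity)
      _ = g y - g x := by
          rw [mul_comm (g x - g y), ← mul_assoc, inv_neg, neg_mul, inv_mul_cancel₀ hβ.ne]; ring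
  linarith

/-- Restricted metric subregularity from restricted firm convexity.
Let `g : ℝ^d → ℝ` be finite-valued convex, `A` a matrix (linear map), `ξ*` a fixed
vector, and `M = {u | −Aᵀξ* ∈ ∂g(u)}` nonempty and closed. If the restricted firm
convexity bound
`g(x) + ⟨Aᵀξ*, x⟩ − inf_{u∈M}(g(u) + ⟨Aᵀξ*, u⟩) ≥ (γ/2) dist(x, M)²`
holds on `K` with `γ > 0`, then
`dist(x, M) ≤ (2/γ) dist(−Aᵀξ*, ∂g(x))` for all `x ∈ K`. -/
theorem stmt_10 {n d : ℕ} (g : E d → ℝ) (A : E d →L[ℝ] E n) (ξstar : E n)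
    (γ : ℝ) (K M : Set (E d))
    (hg : ConvexOn ℝ Set.univ g)
    (hγ : 0 < γ)
    (hM : M = {u : E d | -(ContinuousLinearMap.adjoint A ξstar) ∈ subdiff g u})
    (hMne : M.Nonempty)
    (hMclosed : IsClosed M)
    (hfc : ∀ x ∈ K, γ / 2 * (infDist x M) ^ 2 ≤
      g x + ⟪ContinuousLinearMap.adjoint A ξstar, x⟫ -
        ⨅ u : M, (g (u : E d) + ⟪ContinuousLinearMap.adjoint A ξstar, (u : E d)⟫)) :
    ∀ x ∈ K, infDist x M ≤
      2 / γ * infDist (-(ContinuousLinearMap.adjoint A ξstar)) (subdiff g x) := by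
  intro x hx
  set c := ContinuousLinearMap.adjoint A ξstar with hc
  haveI : Nonempty M := hMne.to_subtype
  obtain ⟨u₀, hu₀M, hu₀d⟩ := hMclosed.exists_infDist_eq_dist hMne x
  have hu₀sub : -c ∈ subdiff g u₀ := by rw [hM] at hu₀M; exact hu₀M
  have hmin : ∀ y, g u₀ + ⟪c, u₀⟫ ≤ g y + ⟪c, y⟫ := by
    intro y
    have h := hu₀sub y
    simp only [inner_neg_left, inner_sub_right] at h
    linarith
  have hInf : g u₀ + ⟪c, u₀⟫ ≤ ⨅ u : M, (g (u : E d) + ⟪c, (u : E d)⟫) :=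
    le_ciInf fun u => hmin u
  have hfcx := hfc x hx
  have hDb : γ / 2 * (infDist x M) ^ 2 ≤ g x + ⟪c, x⟫ - (g u₀ + ⟪c, u₀⟫) := by linarith
  have hsub : ∀ v ∈ subdiff g x, γ / 2 * infDist x M ≤ dist (-c) v := by
    intro v hv
    have h1 : g x + ⟪v, u₀ - x⟫ ≤ g u₀ := hv u₀
    have hexp : ⟪v + c, x - u₀⟫ = -⟪v, u₀ - x⟫ + (⟪c, x⟫ - ⟪c, u₀⟫) := by
      simp only [inner_add_left, inner_sub_right, inner_sub_left]
      have : ⟪v, u₀⟫ - ⟪v, x⟫ = ⟪v, u₀ - x⟫ := (inner_sub_right v u₀ x).symm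
      linarith [inner_sub_right (𝕜 := ℝ) v u₀ x, inner_sub_right (𝕜 := ℝ) v x u₀]
    have h3 : ⟪v + c, x - u₀⟫ ≤ ‖v + c‖ * ‖x - u₀‖ := real_inner_le_norm _ _
    have hnorm : ‖x - u₀‖ = infDist x M := by rw [hu₀d, dist_eq_norm]
    have hdist : dist (-c) v = ‖v + c‖ := by
      rw [dist_eq_norm, show -c - v = -(v + c) by abel, norm_neg]
    rw [hdist]
    rcases (infDist_nonneg : (0:ℝ) ≤ infDist x M).eq_or_lt with hD0 | hD0
    · rw [← hD0]
      simp only [mul_zero]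
      exact norm_nonneg (v + c)
    · have h4 : γ / 2 * (infDist x M) ^ 2 ≤ ‖v + c‖ * infDist x M := by
        rw [← hnorm] at hDb ⊢
        nlinarith
      nlinarith
  have hne := subdiff_nonempty g hg x
  have hkey : γ / 2 * infDist x M ≤ infDist (-c) (subdiff g x) := by
    by_contra h
    push_neg at h
    obtain ⟨v, hv, hlt⟩ := (infDist_lt_iff hne).mp h
    exact absurd hlt (not_lt.2 (hsub v hv))
  have h2γ : (0:ℝ) < 2 / γ := by positivity
  calc infDist x M = 2 / γ * (γ / 2 * infDist x M) := by field_simp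
    _ ≤ 2 / γ * infDist (-c) (subdiff g x) := by
        exact mul_le_mul_of_nonneg_left hkey h2γ.le
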